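/- Fix a finite state space S, a finite action set A, a policy π : S → PMF(A), a reward kernel R : S × A → PMF(ℝ), a transition kernel P : S × A → PMF(S), a discount factor γ ∈ [0,1), a step size α ∈ (0,1), and N ∈ ℕ, and let k = 1 − α + αγ (so k < 1). Then for all initial value estimates V₁, V₂ : S → ℝ: (i) the Kantorovich lifting of the sup-norm cost E(W₁,W₂) = ‖W₁ − W₂‖_∞ satisfies K_E(TD0_N(V₁), TD0_N(V₂)) ≤ k^N · ‖V₁ − V₂‖_∞; and consequently (ii) for every state i, |E_{W ∼ TD0_N(V₁)}[W(i)] − E_{W ∼ TD0_N(V₂)}[W(i)]| ≤ k^N · ‖V₁ − V₂‖_∞. -/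

import Mathlib

open scoped ENNReal

section TD0

variable {S A : Type*} [Fintype S] [DecidableEq S] [Fintype A]
variable (π : S → PMF A) (R : S × A → PMF ℝ) (P : S × A → PMF S) (γ α : ℝ)

/-- Auxiliary: perform the TD(0) update (with fresh, independent samples) at each state in the
given list, keeping the old estimate `V` as the basis of every update. -/
noncomputable def tdSweepAux (V : S → ℝ) : List S → PMF (S → ℝ)
  | [] => PMF.pure V
  | i :: l =>
      (tdSweepAux V l).bind fun W =>
        (π i).bind fun a =>
          (R (i, a)).bind fun r =>
            (P (i, a)).map fun j =>
              Function.update W i ((1 - α) * V i + α * (r + γ * V j))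

/-- One TD(0) sweep: independently for each state `i`, sample `a ∼ π(i)`, `r ∼ R(i,a)`,
`j ∼ P(i,a)` and set `W i = (1−α)·V i + α·(r + γ·V j)`. -/
noncomputable def tdSweep (V : S → ℝ) : PMF (S → ℝ) :=
  tdSweepAux π R P γ α V Finset.univ.toList

/-- The distribution of the value estimate after `N` successive TD(0) sweeps starting from `V`. -/
noncomputable def TD0 : ℕ → (S → ℝ) → PMF (S → ℝ)
  | 0, V => PMF.pure V
  | (n + 1), V => (tdSweep π R P γ α V).bind (TD0 n)

end TD0

/-- Sup-norm of a function on a finite nonempty type. -/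
noncomputable def supNorm {S : Type*} [Fintype S] [Nonempty S] (V : S → ℝ) : ℝ :=
  ⨆ i, |V i|

/-- `μ` is a coupling of the distributions `μ₁`, `μ₂`. -/
def IsCouplingPMF {X : Type*} (μ : PMF (X × X)) (μ₁ μ₂ : PMF X) : Prop :=
  μ.map Prod.fst = μ₁ ∧ μ.map Prod.snd = μ₂

/-- Kantorovich lifting of the cost `E` to distributions. -/
noncomputable def kantPMF {X : Type*} (E : X × X → ℝ≥0∞) (μ₁ μ₂ : PMF X) : ℝ≥0∞ :=
  ⨅ (μ : PMF (X × X)) (_ : IsCouplingPMF μ μ₁ μ₂), ∑' p, E p * μ p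

/-!
Couple two runs of TD(0) synchronously: at every state both runs draw the same action, reward
and next state. The reward then cancels in the difference of the two updates, so on the support
of the coupling each sweep shrinks `‖W₁ - W₂‖_∞` by the factor `k = 1 - α + α γ`. After `N`
sweeps the coupled estimates are surely within `k ^ N ‖V₁ - V₂‖_∞` of each other, which bounds
both the transport cost of this coupling and the difference of the expected estimates.
-/

namespace PMF

variable {β γ : Type*} (μ : PMF β)

theorem tsum_map_mul (f : β → γ) (h : γ → ℝ≥0∞) :
    ∑' c, μ.map f c * h c = ∑' b, μ b * h (f b) := by
  simp_rw [PMF.map_apply, ← ENNReal.tsum_mul_right]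
  rw [ENNReal.tsum_comm]
  refine tsum_congr fun b => ?_
  rw [tsum_eq_single (f b) fun c hc => by rw [if_neg hc, zero_mul]]
  simp

theorem map_apply_eq_tsum_fiber (f : β → γ) (c : γ) :
    μ.map f c = ∑' b : f ⁻¹' {c}, μ b := by
  rw [← toOuterMeasure_apply_singleton, toOuterMeasure_map_apply, toOuterMeasure_apply,
    tsum_subtype]

theorem summable_toReal_mul_iff (g : β → ℝ) :
    Summable (fun b => (μ b).toReal * g b) ↔ ∑' b, μ b * ENNReal.ofReal |g b| ≠ ⊤ := by
  have hne : ∀ b, μ b * ENNReal.ofReal |g b| ≠ ⊤ := fun b =>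
    ENNReal.mul_ne_top (μ.apply_ne_top b) ENNReal.ofReal_ne_top
  have habs :
      (fun b => |(μ b).toReal * g b|) = fun b => (μ b * ENNReal.ofReal |g b|).toReal :=
    funext fun b => by
      rw [ENNReal.toReal_mul, ENNReal.toReal_ofReal (abs_nonneg _), abs_mul, ENNReal.abs_toReal]
  rw [← summable_abs_iff, habs]
  refine ⟨fun hs => ?_, ENNReal.summable_toReal⟩
  rw [← tsum_congr fun b => ENNReal.ofReal_toReal (hne b),
    ← ENNReal.ofReal_tsum_of_nonneg (fun _ => ENNReal.toReal_nonneg) hs]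
  exact ENNReal.ofReal_ne_top

theorem tsum_toReal_map_mul (f : β → γ) (g : γ → ℝ) :
    ∑' c, ((μ.map f) c).toReal * g c = ∑' b, (μ b).toReal * g (f b) := by
  by_cases hs : Summable fun b => (μ b).toReal * g (f b)
  · rw [← (hs.hasSum.tsum_fiberwise f).tsum_eq]
    refine tsum_congr fun c => ?_
    calc ((μ.map f) c).toReal * g c = (∑' b : f ⁻¹' {c}, (μ b).toReal) * g c := by
          rw [map_apply_eq_tsum_fiber,
            ENNReal.tsum_toReal_eq fun b : f ⁻¹' {c} => μ.apply_ne_top b]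
      _ = ∑' b : f ⁻¹' {c}, (μ b).toReal * g (f b) := by
          rw [← tsum_mul_right]
          exact tsum_congr fun b => by rw [b.2]
  · have hs' : ¬ Summable fun c => ((μ.map f) c).toReal * g c := by
      rwa [summable_toReal_mul_iff, tsum_map_mul μ f fun c => ENNReal.ofReal |g c|,
        ← summable_toReal_mul_iff μ fun b => g (f b)]
    rw [tsum_eq_zero_of_not_summable hs, tsum_eq_zero_of_not_summable hs']

theorem hasSum_toReal : HasSum (fun b => (μ b).toReal) 1 := by
  have := ENNReal.hasSum_toReal (μ.tsum_coe ▸ ENNReal.one_ne_top)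
  rwa [← ENNReal.tsum_toReal_eq μ.apply_ne_top, μ.tsum_coe, ENNReal.toReal_one] at this

theorem abs_tsum_toReal_mul_sub_le {f₁ f₂ : β → ℝ} {c : ℝ}
    (h : ∀ b ∈ μ.support, |f₁ b - f₂ b| ≤ c) :
    |∑' b, (μ b).toReal * f₁ b - ∑' b, (μ b).toReal * f₂ b| ≤ c := by
  have hD : ∀ b, ‖(μ b).toReal * (f₁ b - f₂ b)‖ ≤ (μ b).toReal * c := fun b => by
    by_cases hb : μ b = 0
    · simp [hb]
    · rw [Real.norm_eq_abs, abs_mul, ENNReal.abs_toReal]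
      exact mul_le_mul_of_nonneg_left (h b hb) ENNReal.toReal_nonneg
  have hc : HasSum (fun b => (μ b).toReal * c) c := by
    simpa using μ.hasSum_toReal.mul_right c
  have hD_sum : |∑' b, (μ b).toReal * (f₁ b - f₂ b)| ≤ c := tsum_of_norm_bounded hc hD
  have hD_summable := hc.summable.of_norm_bounded hD
  -- The difference is dominated by `μ · c`, so the two series are summable together.
  by_cases h₂ : Summable fun b => (μ b).toReal * f₂ b
  · have h₁ : Summable fun b => (μ b).toReal * f₁ b :=
      (h₂.add hD_summable).congr fun b => by ring
    rwa [← h₁.tsum_sub h₂, ← tsum_congr fun b => mul_sub _ _ _]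
  · have h₁ : ¬ Summable fun b => (μ b).toReal * f₁ b := fun h₁ =>
      h₂ <| (h₁.sub hD_summable).congr fun b => by ring
    rw [tsum_eq_zero_of_not_summable h₁, tsum_eq_zero_of_not_summable h₂, sub_zero, abs_zero]
    exact (abs_nonneg _).trans hD_sum

end PMF

section Coupling

variable {X Y : Type*}

namespace IsCouplingPMF

theorem pure (x y : X) : IsCouplingPMF (PMF.pure (x, y)) (PMF.pure x) (PMF.pure y) :=
  ⟨PMF.pure_map _ _, PMF.pure_map _ _⟩

theorem bind {μ : PMF (X × X)} {μ₁ μ₂ : PMF X} (hμ : IsCouplingPMF μ μ₁ μ₂)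
    {κ : X × X → PMF (Y × Y)} {f g : X → PMF Y}
    (hκ : ∀ p, IsCouplingPMF (κ p) (f p.1) (g p.2)) :
    IsCouplingPMF (μ.bind κ) (μ₁.bind f) (μ₂.bind g) := by
  constructor
  · rw [PMF.map_bind, ← hμ.1, PMF.bind_map]
    exact congrArg _ (funext fun p => (hκ p).1)
  · rw [PMF.map_bind, ← hμ.2, PMF.bind_map]
    exact congrArg _ (funext fun p => (hκ p).2)

theorem abs_tsum_sub_le {μ : PMF (X × X)} {μ₁ μ₂ : PMF X} (hμ : IsCouplingPMF μ μ₁ μ₂)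
    {f : X → ℝ} {c : ℝ} (h : ∀ p ∈ μ.support, |f p.1 - f p.2| ≤ c) :
    |∑' x, (μ₁ x).toReal * f x - ∑' x, (μ₂ x).toReal * f x| ≤ c := by
  rw [← hμ.1, ← hμ.2, PMF.tsum_toReal_map_mul, PMF.tsum_toReal_map_mul]
  exact μ.abs_tsum_toReal_mul_sub_le h

end IsCouplingPMF

theorem kantPMF_le_of_isCouplingPMF {E : X × X → ℝ≥0∞} {μ : PMF (X × X)} {μ₁ μ₂ : PMF X}
    (hμ : IsCouplingPMF μ μ₁ μ₂) {c : ℝ≥0∞} (h : ∀ p ∈ μ.support, E p ≤ c) :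
    kantPMF E μ₁ μ₂ ≤ c := by
  refine le_trans (iInf₂_le μ hμ) ?_
  calc ∑' p, E p * μ p ≤ ∑' p, c * μ p := ENNReal.tsum_le_tsum fun p => by
        by_cases hp : μ p = 0
        · simp [hp]
        · gcongr
          exact h p hp
    _ = c := by rw [ENNReal.tsum_mul_left, μ.tsum_coe, mul_one]

end Coupling

section SupNorm

variable {S : Type*} [Fintype S] [Nonempty S]

theorem abs_le_supNorm (V : S → ℝ) (x : S) : |V x| ≤ supNorm V :=
  le_ciSup (f := fun i => |V i|) (Finite.bddAbove_range _) x

theorem supNorm_le {V : S → ℝ} {c : ℝ} (h : ∀ x, |V x| ≤ c) : supNorm V ≤ c :=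
  ciSup_le h

end SupNorm

theorem abs_tdUpdate_sub_le {S : Type*} {γ α c : ℝ}
    (hγ : 0 ≤ γ) (hα0 : 0 ≤ α) (hα1 : α ≤ 1)
    {V₁ V₂ : S → ℝ} (hV : ∀ x, |V₁ x - V₂ x| ≤ c) (i j : S) (r : ℝ) :
    |(1 - α) * V₁ i + α * (r + γ * V₁ j) - ((1 - α) * V₂ i + α * (r + γ * V₂ j))|
      ≤ (1 - α + α * γ) * c :=
  calc _ = |(1 - α) * (V₁ i - V₂ i) + α * γ * (V₁ j - V₂ j)| := by ring_nf
    _ ≤ (1 - α) * |V₁ i - V₂ i| + α * γ * |V₁ j - V₂ j| := by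
        refine (abs_add_le _ _).trans_eq ?_
        rw [abs_mul, abs_mul, abs_of_nonneg (sub_nonneg.2 hα1),
          abs_of_nonneg (mul_nonneg hα0 hγ)]
    _ ≤ (1 - α) * c + α * γ * c :=
        add_le_add (mul_le_mul_of_nonneg_left (hV i) (sub_nonneg.2 hα1))
          (mul_le_mul_of_nonneg_left (hV j) (mul_nonneg hα0 hγ))
    _ = (1 - α + α * γ) * c := by ring

section TDSweepCoupling

variable {S A : Type*} [DecidableEq S]
variable (π : S → PMF A) (R : S × A → PMF ℝ) (P : S × A → PMF S) (γ α : ℝ)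

noncomputable def tdSweepAuxCoupling (V₁ V₂ : S → ℝ) : List S → PMF ((S → ℝ) × (S → ℝ))
  | [] => PMF.pure (V₁, V₂)
  | i :: l =>
      (tdSweepAuxCoupling V₁ V₂ l).bind fun W =>
        (π i).bind fun a =>
          (R (i, a)).bind fun r =>
            (P (i, a)).map fun j =>
              (Function.update W.1 i ((1 - α) * V₁ i + α * (r + γ * V₁ j)),
               Function.update W.2 i ((1 - α) * V₂ i + α * (r + γ * V₂ j)))

theorem isCouplingPMF_tdSweepAuxCoupling (V₁ V₂ : S → ℝ) (l : List S) :
    IsCouplingPMF (tdSweepAuxCoupling π R P γ α V₁ V₂ l)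
      (tdSweepAux π R P γ α V₁ l) (tdSweepAux π R P γ α V₂ l) := by
  induction l with
  | nil => exact IsCouplingPMF.pure V₁ V₂
  | cons i l ih =>
    refine ih.bind fun W => ⟨?_, ?_⟩ <;> simp only [PMF.map_bind, PMF.map_comp] <;> rfl

variable {γ α}

theorem tdSweepAuxCoupling_support_bound (hγ : 0 ≤ γ) (hα0 : 0 ≤ α) (hα1 : α ≤ 1)
    {V₁ V₂ : S → ℝ} {c : ℝ} (hV : ∀ x, |V₁ x - V₂ x| ≤ c) (l : List S) :
    ∀ W ∈ (tdSweepAuxCoupling π R P γ α V₁ V₂ l).support, ∀ x ∈ l,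
      |W.1 x - W.2 x| ≤ (1 - α + α * γ) * c := by
  induction l with
  | nil => simp
  | cons i l ih =>
    simp only [tdSweepAuxCoupling, PMF.mem_support_bind_iff, PMF.support_map, Set.mem_image]
    rintro _ ⟨W, hW, a, -, r, -, j, -, rfl⟩ x hx
    by_cases hxi : x = i
    · subst hxi
      simpa using abs_tdUpdate_sub_le hγ hα0 hα1 hV x j r
    · simpa [Function.update_of_ne hxi] using ih W hW x ((List.mem_cons.1 hx).resolve_left hxi)

end TDSweepCoupling

section TD0Coupling

variable {S A : Type*} [Fintype S] [DecidableEq S]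
variable (π : S → PMF A) (R : S × A → PMF ℝ) (P : S × A → PMF S) (γ α : ℝ)

noncomputable def td0Coupling : ℕ → (S → ℝ) × (S → ℝ) → PMF ((S → ℝ) × (S → ℝ))
  | 0, V => PMF.pure V
  | n + 1, V => (tdSweepAuxCoupling π R P γ α V.1 V.2 Finset.univ.toList).bind (td0Coupling n)

theorem isCouplingPMF_td0Coupling (N : ℕ) (V : (S → ℝ) × (S → ℝ)) :
    IsCouplingPMF (td0Coupling π R P γ α N V) (TD0 π R P γ α N V.1) (TD0 π R P γ α N V.2) := by
  induction N generalizing V with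
  | zero => exact IsCouplingPMF.pure V.1 V.2
  | succ n ih => exact (isCouplingPMF_tdSweepAuxCoupling π R P γ α V.1 V.2 _).bind ih

variable {γ α}

theorem td0Coupling_support_bound [Nonempty S] (hγ : 0 ≤ γ) (hα0 : 0 ≤ α) (hα1 : α ≤ 1)
    (N : ℕ) (V : (S → ℝ) × (S → ℝ)) :
    ∀ p ∈ (td0Coupling π R P γ α N V).support,
      supNorm (p.1 - p.2) ≤ (1 - α + α * γ) ^ N * supNorm (V.1 - V.2) := by
  induction N generalizing V with
  | zero => simp [td0Coupling]
  | succ n ih =>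
    simp only [td0Coupling, PMF.mem_support_bind_iff]
    rintro p ⟨W, hW, hp⟩
    have hsweep : supNorm (W.1 - W.2) ≤ (1 - α + α * γ) * supNorm (V.1 - V.2) :=
      supNorm_le fun x => tdSweepAuxCoupling_support_bound π R P hγ hα0 hα1
        (abs_le_supNorm (V.1 - V.2)) _ W hW x (Finset.mem_toList.2 (Finset.mem_univ x))
    calc supNorm (p.1 - p.2) ≤ (1 - α + α * γ) ^ n * supNorm (W.1 - W.2) := ih W p hp
      _ ≤ (1 - α + α * γ) ^ n * ((1 - α + α * γ) * supNorm (V.1 - V.2)) :=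
          mul_le_mul_of_nonneg_left hsweep (pow_nonneg (by nlinarith) n)
      _ = (1 - α + α * γ) ^ (n + 1) * supNorm (V.1 - V.2) := by ring

end TD0Coupling

theorem td0_convergence {S A : Type*} [Fintype S] [Nonempty S] [DecidableEq S]
    (π : S → PMF A) (R : S × A → PMF ℝ) (P : S × A → PMF S)
    (γ : ℝ) (hγ0 : 0 ≤ γ)
    (α : ℝ) (hα0 : 0 < α) (hα1 : α < 1)
    (N : ℕ) (V₁ V₂ : S → ℝ) :
    (kantPMF (fun W => ENNReal.ofReal (supNorm (W.1 - W.2)))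
        (TD0 π R P γ α N V₁) (TD0 π R P γ α N V₂)
      ≤ ENNReal.ofReal ((1 - α + α * γ) ^ N * supNorm (V₁ - V₂))) ∧
    (∀ i : S,
      |(∑' W : S → ℝ, ((TD0 π R P γ α N V₁) W).toReal * W i) -
          (∑' W : S → ℝ, ((TD0 π R P γ α N V₂) W).toReal * W i)|
        ≤ (1 - α + α * γ) ^ N * supNorm (V₁ - V₂)) := by
  have hcoupling := isCouplingPMF_td0Coupling π R P γ α N (V₁, V₂)
  have hbound := td0Coupling_support_bound π R P hγ0 hα0.le hα1.le N (V₁, V₂)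
  exact ⟨kantPMF_le_of_isCouplingPMF hcoupling fun p hp => ENNReal.ofReal_le_ofReal (hbound p hp),
    fun i => hcoupling.abs_tsum_sub_le fun p hp =>
      (abs_le_supNorm (p.1 - p.2) i).trans (hbound p hp)⟩
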